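/- Let t ≥ 2 be an integer, let α > 0 be a real number, let k be a positive integer, and let G be a simple graph with Δ(G) ≥ α. Let s_1, …, s_{t−1} ≥ 1 be real numbers, let 1 ≤ ℓ ≤ t, let J ⊆ [k], and fix vertices u_j ∈ V(G) for each j ∈ J. Then for any fixed vertices y_1, …, y_t of the k-th tensor power G^k, the number of (s_1, …, s_{t−1})-good t-ladders in G^k of the form (x_1, y_1, x_2, y_2, …, x_t, y_t) satisfying x_ℓ(j) = u_j for all j ∈ J is at most Δ(G)^k · (∏_{i=1}^{t−1} s_i) · α^{−|J|}. -/

import Mathlib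

open SimpleGraph Finset

/-- The codegree of `u` and `v` in `H`: the number of common neighbours. -/
noncomputable def codeg {V : Type*} (H : SimpleGraph V) (u v : V) : ℕ :=
  (H.neighborSet u ∩ H.neighborSet v).ncard

/-- The `k`-th tensor power of `G`: vertices are `k`-tuples of vertices of `G`,
with two tuples adjacent iff they are adjacent in `G` in every coordinate. -/
def tensorPow {V : Type*} (G : SimpleGraph V) (k : ℕ) : SimpleGraph (Fin k → V) where
  Adj x y := x ≠ y ∧ ∀ j, G.Adj (x j) (y j)
  symm := ⟨fun x y h => ⟨h.1.symm, fun j => (h.2 j).symm⟩⟩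
  loopless := ⟨fun x h => h.1 rfl⟩

/-- A `t`-ladder in `H` (vertices indexed from `0` to `t-1`):
`x_i x_{i+1}`, `y_i y_{i+1}` are edges for `i < t-1`, and `x_i y_i` is an
edge for all `i`. -/
def IsLadder {W : Type*} (H : SimpleGraph W) (t : ℕ) (x y : Fin t → W) : Prop :=
  (∀ i : Fin t, H.Adj (x i) (y i)) ∧
  ∀ (i : Fin t) (h : (i : ℕ) + 1 < t),
    H.Adj (x i) (x ⟨(i : ℕ) + 1, h⟩) ∧ H.Adj (y i) (y ⟨(i : ℕ) + 1, h⟩)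

/-- An `(s_0, …, s_{t-2})`-good `t`-ladder in `G^k` (with respect to the
parameter `α`): a `t`-ladder `(x_0, y_0, …, x_{t-1}, y_{t-1})` in `G^k` such
that for each `i < t-1` the codegree of `x_{i+1}` and `y_i` in `G^k` is at most
`s i`, for each `i < t-1` and each coordinate `j` the codegree of `x_{i+1}(j)`
and `y_i(j)` in `G` is at least `α`, and in each coordinate `j` the `2t`
vertices `x_0(j), …, x_{t-1}(j), y_0(j), …, y_{t-1}(j)` are pairwise distinct. -/
def IsGoodLadder {V : Type*} (G : SimpleGraph V) (k t : ℕ) (α : ℝ) (s : ℕ → ℝ)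
    (x y : Fin t → (Fin k → V)) : Prop :=
  IsLadder (tensorPow G k) t x y ∧
  (∀ (i : Fin t) (h : (i : ℕ) + 1 < t),
    (codeg (tensorPow G k) (x ⟨(i : ℕ) + 1, h⟩) (y i) : ℝ) ≤ s i ∧
    ∀ j : Fin k, α ≤ (codeg G (x ⟨(i : ℕ) + 1, h⟩ j) (y i j) : ℝ)) ∧
  ∀ j : Fin k,
    Function.Injective (fun p : Fin t × Bool => if p.2 then x p.1 j else y p.1 j)

/-! Read a ladder backwards: `x_{t-1}` is a neighbour of `y_{t-1}`, leaving at most `Δ^k`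
choices, and each further `x_i` is a common neighbour of `x_{i+1}` and `y_i`, leaving at most
`codeg(x_{i+1}, y_i) ≤ s_i` choices. The codegree in `G^k` is the product of the coordinate
codegrees, each at least `α`, so pinning the coordinates `j ∈ J` of `x_ℓ` divides the number of
choices at the step that picks `x_ℓ` by at least `α^{|J|}`. -/

theorem Finset.card_le_mul_prod_of_backward_chain {β : Type*} [DecidableEq β] {n : ℕ}
    (S : Finset (Fin (n + 1) → β)) (A : Finset β) (N : Fin n → β → Finset β)
    (a : ℝ) (b : Fin n → ℝ) (hb : ∀ i, 0 ≤ b i)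
    (hA : ∀ x ∈ S, x (Fin.last n) ∈ A) (hAa : (#A : ℝ) ≤ a)
    (hN : ∀ x ∈ S, ∀ i, x i.castSucc ∈ N i (x i.succ))
    (hNb : ∀ x ∈ S, ∀ i, (#(N i (x i.succ)) : ℝ) ≤ b i) :
    (#S : ℝ) ≤ a * ∏ i, b i := by
  induction n with
  | zero =>
    have hinj : Set.InjOn (fun x : Fin 1 → β => x (Fin.last 0)) S := fun x _ x' _ h =>
      funext fun r => by rwa [Subsingleton.elim r (Fin.last 0)]
    simpa using hAa.trans' (mod_cast card_le_card_of_injOn _ hA hinj)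
  | succ n ih =>
    have htail : (#(S.image Fin.tail) : ℝ) ≤ a * ∏ i : Fin n, b i.succ := by
      refine ih _ (fun i : Fin n => N i.succ) _ (fun i => hb i.succ) ?_ ?_ ?_ <;>
        simp only [mem_image] <;> rintro _ ⟨x, hx, rfl⟩
      · simpa [Fin.tail] using hA x hx
      · exact fun i => by simpa only [Fin.tail, Fin.succ_castSucc] using hN x hx i.succ
      · exact fun i => hNb x hx i.succ
    have hfibre : ∀ w ∈ S.image Fin.tail, (#{x ∈ S | Fin.tail x = w} : ℝ) ≤ b 0 := by
      simp only [mem_image]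
      rintro _ ⟨x₀, hx₀, rfl⟩
      refine le_trans (mod_cast card_le_card_of_injOn (fun x => x 0) (t := N 0 (x₀ 1)) ?_ ?_)
        (hNb x₀ hx₀ 0)
      · intro x hx
        simp only [coe_filter, Set.mem_ofPred_eq] at hx
        have h₁ : x 1 = x₀ 1 := congrFun hx.2 0
        simpa [← h₁] using hN x hx.1 0
      · intro x hx x' hx' h
        simp only [coe_filter, Set.mem_ofPred_eq] at hx hx'
        rw [← Fin.cons_self_tail x, ← Fin.cons_self_tail x', hx.2, hx'.2]
        exact congrArg (Fin.cons · _) h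
    calc (#S : ℝ) = ∑ w ∈ S.image Fin.tail, (#{x ∈ S | Fin.tail x = w} : ℝ) := by
          exact_mod_cast card_eq_sum_card_image Fin.tail S
      _ ≤ ∑ _w ∈ S.image Fin.tail, b 0 := sum_le_sum hfibre
      _ = b 0 * #(S.image Fin.tail) := by rw [sum_const, nsmul_eq_mul, mul_comm]
      _ ≤ b 0 * (a * ∏ i : Fin n, b i.succ) := mul_le_mul_of_nonneg_left htail (hb 0)
      _ = a * ∏ i, b i := by rw [Fin.prod_univ_succ]; ring

section Pinned

variable {ι β : Type*} [Fintype ι] [DecidableEq ι] [DecidableEq β]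

theorem card_piFinset_filter_forall_eq_mul_pow_le (T : ι → Finset β) (m : ι → ℝ)
    (hTm : ∀ j, (#(T j) : ℝ) ≤ m j) (J : Finset ι) (u : ι → β) {α : ℝ}
    (hα : 0 ≤ α) (hαm : ∀ j ∈ J, α ≤ m j) :
    (#{z ∈ Fintype.piFinset T | ∀ j ∈ J, z j = u j} : ℝ) * α ^ #J ≤ ∏ j, m j := by
  have hm : ∀ j, 0 ≤ m j := fun j => (Nat.cast_nonneg _).trans (hTm j)
  have hsub : {z ∈ Fintype.piFinset T | ∀ j ∈ J, z j = u j} ⊆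
      Fintype.piFinset fun j => if j ∈ J then {u j} else T j := by
    intro z hz
    simp only [mem_filter, Fintype.mem_piFinset] at hz ⊢
    intro j
    split_ifs with hj
    · exact mem_singleton.2 (hz.2 j hj)
    · exact hz.1 j
  calc (#{z ∈ Fintype.piFinset T | ∀ j ∈ J, z j = u j} : ℝ) * α ^ #J
      ≤ (∏ j ∈ Jᶜ, m j) * ∏ j ∈ J, m j := by
        gcongr
        · exact prod_nonneg fun j _ => hm j
        · calc (#{z ∈ Fintype.piFinset T | ∀ j ∈ J, z j = u j} : ℝ)
              ≤ ∏ j, ((if j ∈ J then 1 else #(T j) : ℕ) : ℝ) := by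
                exact_mod_cast (card_le_card hsub).trans_eq (by simp [apply_ite card])
            _ ≤ ∏ j, if j ∈ J then 1 else m j :=
                prod_le_prod (fun j _ => by positivity) fun j _ => by split_ifs <;> simp [hTm]
            _ = ∏ j ∈ Jᶜ, m j := by simp [prod_ite, filter_not, compl_eq_univ_sdiff]
        · exact (prod_const α).symm.trans_le (prod_le_prod (fun _ _ => hα) hαm)
    _ = ∏ j, m j := by rw [mul_comm, prod_mul_prod_compl]

/-- The pinning is switched on by `P`: in a ladder only the vertex `x_ℓ` is pinned. -/
def pinnedPiFinset (T : ι → Finset β) (P : Prop) [Decidable P] (J : Finset ι) (u : ι → β) :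
    Finset (ι → β) :=
  {z ∈ Fintype.piFinset T | P → ∀ j ∈ J, z j = u j}

theorem mem_pinnedPiFinset {T : ι → Finset β} {P : Prop} [Decidable P] {J : Finset ι}
    {u z : ι → β} :
    z ∈ pinnedPiFinset T P J u ↔ (∀ j, z j ∈ T j) ∧ (P → ∀ j ∈ J, z j = u j) := by
  simp [pinnedPiFinset]

theorem card_pinnedPiFinset_le (T : ι → Finset β) (m : ι → ℝ)
    (hTm : ∀ j, (#(T j) : ℝ) ≤ m j)
    (P : Prop) [Decidable P] (J : Finset ι) (u : ι → β) {α : ℝ} (hα : 0 < α)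
    (hαm : P → ∀ j ∈ J, α ≤ m j) :
    (#(pinnedPiFinset T P J u) : ℝ) ≤ (∏ j, m j) * if P then α ^ (-(#J : ℤ)) else 1 := by
  unfold pinnedPiFinset
  split_ifs with hP
  · rw [zpow_neg, zpow_natCast, ← div_eq_mul_inv, le_div_iff₀ (by positivity)]
    simpa only [hP, true_imp_iff] using
      card_piFinset_filter_forall_eq_mul_pow_le T m hTm J u hα.le (hαm hP)
  · calc (#{z ∈ Fintype.piFinset T | P → ∀ j ∈ J, z j = u j} : ℝ)
        ≤ #(Fintype.piFinset T) := mod_cast card_filter_le _ _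
      _ ≤ (∏ j, m j) * 1 := by
        rw [Fintype.card_piFinset, Nat.cast_prod, mul_one]
        exact prod_le_prod (fun _ _ => Nat.cast_nonneg _) fun j _ => hTm j

end Pinned

theorem card_toFinset_commonNeighbors {V : Type*} [Fintype V] (G : SimpleGraph V)
    [DecidableRel G.Adj] (a b : V) : #(G.commonNeighbors a b).toFinset = codeg G a b :=
  (Set.ncard_eq_toFinset_card' _).symm

theorem commonNeighbors_tensorPow {V : Type*} (G : SimpleGraph V) {k : ℕ} (hk : k ≠ 0)
    (a b : Fin k → V) :
    (tensorPow G k).commonNeighbors a b = Set.univ.pi fun j => G.commonNeighbors (a j) (b j) := by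
  ext z
  have hne : ∀ w : Fin k → V, (∀ j, G.Adj (w j) (z j)) → w ≠ z := fun w hw h =>
    (hw ⟨0, Nat.pos_of_ne_zero hk⟩).ne (congrFun h _)
  simp only [mem_commonNeighbors, tensorPow, Set.mem_pi, Set.mem_univ, true_imp_iff]
  exact ⟨fun h j => ⟨h.1.2 j, h.2.2 j⟩, fun h =>
    ⟨⟨hne a fun j => (h j).1, fun j => (h j).1⟩,
      ⟨hne b fun j => (h j).2, fun j => (h j).2⟩⟩⟩

theorem codeg_tensorPow {V : Type*} [Finite V] (G : SimpleGraph V) {k : ℕ} (hk : k ≠ 0)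
    (a b : Fin k → V) : codeg (tensorPow G k) a b = ∏ j, codeg G (a j) (b j) := by
  classical
  have := Fintype.ofFinite V
  have hpi : (tensorPow G k).commonNeighbors a b =
      ↑(Fintype.piFinset fun j => (G.commonNeighbors (a j) (b j)).toFinset) := by
    simp [commonNeighbors_tensorPow G hk, Fintype.coe_piFinset]
  simp_rw [codeg, ← commonNeighbors_eq, hpi, Set.ncard_coe_finset, Fintype.card_piFinset,
    ← Set.ncard_eq_toFinset_card']

section Choices

variable {V : Type*} [Fintype V] [DecidableEq V] (G : SimpleGraph V) [DecidableRel G.Adj]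
  {k : ℕ} (P : Prop) [Decidable P] (J : Finset (Fin k)) (u : Fin k → V) {α : ℝ}

theorem card_pinnedPiFinset_neighborFinset_le (hα : 0 < α) (hΔ : α ≤ G.maxDegree)
    (v : Fin k → V) :
    (#(pinnedPiFinset (fun j => G.neighborFinset (v j)) P J u) : ℝ) ≤
      (G.maxDegree : ℝ) ^ k * if P then α ^ (-(#J : ℤ)) else 1 := by
  have h := card_pinnedPiFinset_le _ (fun _ => (G.maxDegree : ℝ))
    (fun j => by
      rw [card_neighborFinset_eq_degree]
      exact_mod_cast G.degree_le_maxDegree (v j))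
    P J u hα fun _ _ _ => hΔ
  rwa [prod_const, card_univ, Fintype.card_fin] at h

theorem card_pinnedPiFinset_commonNeighbors_le (hk : k ≠ 0) (hα : 0 < α) {σ : ℝ}
    (a b : Fin k → V) (hσ : (codeg (tensorPow G k) a b : ℝ) ≤ σ)
    (hαab : ∀ j, α ≤ codeg G (a j) (b j)) :
    (#(pinnedPiFinset (fun j => (G.commonNeighbors (a j) (b j)).toFinset) P J u) : ℝ) ≤
      σ * if P then α ^ (-(#J : ℤ)) else 1 := by
  refine (card_pinnedPiFinset_le _ (fun j => (codeg G (a j) (b j) : ℝ))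
    (fun j => by rw [card_toFinset_commonNeighbors]) P J u hα fun _ j _ => hαab j).trans ?_
  refine mul_le_mul_of_nonneg_right ?_ (by positivity)
  rwa [← Nat.cast_prod, ← codeg_tensorPow G hk]

end Choices

namespace IsGoodLadder

variable {V : Type*} {G : SimpleGraph V} {k n : ℕ} {α : ℝ} {s : ℕ → ℝ}
  {x y : Fin (n + 1) → Fin k → V}

theorem adj_apply (h : IsGoodLadder G k (n + 1) α s x y) (p : Fin (n + 1)) (j : Fin k) :
    G.Adj (y p j) (x p j) :=
  ((h.1.1 p).2 j).symm

theorem mem_commonNeighbors (h : IsGoodLadder G k (n + 1) α s x y) (i : Fin n) (j : Fin k) :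
    x i.castSucc j ∈ G.commonNeighbors (x i.succ j) (y i.castSucc j) :=
  (SimpleGraph.mem_commonNeighbors G).2
    ⟨((h.1.2 i.castSucc i.succ.isLt).1.2 j).symm, h.adj_apply _ j⟩

theorem codeg_le (h : IsGoodLadder G k (n + 1) α s x y) (i : Fin n) :
    (codeg (tensorPow G k) (x i.succ) (y i.castSucc) : ℝ) ≤ s i :=
  (h.2.1 i.castSucc i.succ.isLt).1

theorem le_codeg (h : IsGoodLadder G k (n + 1) α s x y) (i : Fin n) (j : Fin k) :
    α ≤ codeg G (x i.succ j) (y i.castSucc j) :=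
  (h.2.1 i.castSucc i.succ.isLt).2 j

end IsGoodLadder

theorem few_bad_ladders_b_general (t : ℕ) (α : ℝ) (hα : 0 < α)
    (k : ℕ) (hk : 0 < k) (V : Type) [Fintype V] (G : SimpleGraph V)
    [DecidableRel G.Adj] (hΔ : α ≤ (G.maxDegree : ℝ))
    (s : ℕ → ℝ) (hs : ∀ i, i < t - 1 → 1 ≤ s i)
    (ℓ : Fin t) (J : Finset (Fin k)) (u : Fin k → V)
    (y : Fin t → (Fin k → V)) :
    (Nat.card {x : Fin t → (Fin k → V) //
        IsGoodLadder G k t α s x y ∧ ∀ j ∈ J, x ℓ j = u j} : ℝ) ≤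
      (G.maxDegree : ℝ) ^ k * (∏ i ∈ range (t - 1), s i) * α ^ (-(J.card : ℤ)) := by
  classical
  obtain ⟨n, rfl⟩ := Nat.exists_eq_add_one.2 ℓ.pos
  set c : Fin (n + 1) → ℝ := fun p => if p = ℓ then α ^ (-(#J : ℤ)) else 1
  have hc : ∀ p, 0 ≤ c p := fun p => by positivity
  have hc_prod : c (Fin.last n) * ∏ i : Fin n, c i.castSucc = α ^ (-(#J : ℤ)) := by
    rw [mul_comm, ← Fin.prod_univ_castSucc, prod_ite_eq' univ ℓ, if_pos (mem_univ _)]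
  rw [Nat.card_eq_fintype_card, Fintype.card_subtype]
  calc _ ≤ (G.maxDegree : ℝ) ^ k * c (Fin.last n) * ∏ i : Fin n, s i * c i.castSucc := by
        refine card_le_mul_prod_of_backward_chain _
          (pinnedPiFinset (fun j => G.neighborFinset (y (Fin.last n) j)) (Fin.last n = ℓ) J u)
          (fun i v => pinnedPiFinset (fun j => (G.commonNeighbors (v j) (y i.castSucc j)).toFinset)
            (i.castSucc = ℓ) J u)
          _ _ (fun i => mul_nonneg (by linarith [hs i (by omega)]) (hc _)) ?_
          (card_pinnedPiFinset_neighborFinset_le G _ J u hα hΔ _) ?_ ?_ <;>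
          simp only [mem_filter, mem_univ, true_and] <;> intro x hx
        · simp only [mem_pinnedPiFinset, mem_neighborFinset]
          exact ⟨hx.1.adj_apply _, fun h => h ▸ hx.2⟩
        · intro i
          simp only [mem_pinnedPiFinset, Set.mem_toFinset]
          exact ⟨hx.1.mem_commonNeighbors i, fun h => h ▸ hx.2⟩
        · exact fun i => card_pinnedPiFinset_commonNeighbors_le G _ J u hk.ne' hα _ _
            (hx.1.codeg_le i) (hx.1.le_codeg i)
    _ = _ := by
        rw [prod_mul_distrib, Fin.prod_univ_eq_prod_range (fun i => s i), Nat.add_sub_cancel,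
          ← hc_prod]
        ring

/-- Lemma 2.5(b): for fixed `y_0, …, y_{t-1}` in `G^k`, `ℓ`, `J ⊆ [k]` and
fixed vertices `u j` for `j ∈ J`, the number of good `t`-ladders
`(x_0, y_0, …, x_{t-1}, y_{t-1})` with `x_ℓ(j) = u j` for all `j ∈ J` is at
most `Δ(G)^k · (∏ s_i) · α^{-|J|}`. -/
theorem few_bad_ladders_b (t : ℕ) (ht : 2 ≤ t) (α : ℝ) (hα : 0 < α)
    (k : ℕ) (hk : 0 < k) (V : Type) [Fintype V] (G : SimpleGraph V)
    [DecidableRel G.Adj] (hΔ : α ≤ (G.maxDegree : ℝ))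
    (s : ℕ → ℝ) (hs : ∀ i, i < t - 1 → 1 ≤ s i)
    (ℓ : Fin t) (J : Finset (Fin k)) (u : Fin k → V)
    (y : Fin t → (Fin k → V)) :
    (Nat.card {x : Fin t → (Fin k → V) //
        IsGoodLadder G k t α s x y ∧ ∀ j ∈ J, x ℓ j = u j} : ℝ) ≤
      (G.maxDegree : ℝ) ^ k * (∏ i ∈ range (t - 1), s i) * α ^ (-(J.card : ℤ)) :=
  few_bad_ladders_b_general t α hα k hk V G hΔ s hs ℓ J u y
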